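/- arXiv:2201.01645 — 3 statements merged into one kernel-verified Lean document; each statement's English description precedes it below -/
import Mathlib

section
/- (Recursion for $G$.) With $G(a,b,c,d,e)$ defined as the multivariate $q$-binomial sum over families $(k_{i,n})$ as in the context, for all integers $a > 0$, $b > 0$, $c \geq 0$, $d \geq 0$, and all integers $e$, one has $G(a,b,c,d,e) = \sum_{k_1,k_2,k_3,k_4 \geq 0} \left(\prod_{i=1}^{2} \genfrac{[}{]}{0pt}{}{e-2a+2b+c+d-k_3-k_4}{k_i}_q \genfrac{[}{]}{0pt}{}{e-2a+b+c+d}{k_{i+2}}_q\right) G(a-b-k_1,\; b-k_1-k_2-k_3-k_4,\; c-k_1-k_4,\; d-k_1-k_3,\; e)$. -/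
noncomputable def qint (t : RatFunc ℚ) (n : ℤ) : RatFunc ℚ := t ^ n - t ^ (-n)

noncomputable def qfact (t : RatFunc ℚ) (n : ℤ) : RatFunc ℚ :=
  ∏ i ∈ Finset.range n.toNat, qint t ((i : ℤ) + 1)

/-- The symmetric `q`-binomial coefficient `[n m]_q`, with `t = q^{1/2}`. -/
noncomputable def qbinom (t : RatFunc ℚ) (n m : ℤ) : RatFunc ℚ :=
  if 0 ≤ m ∧ m ≤ n then qfact t n / (qfact t m * qfact t (n - m)) else 0

/-- Inner sum `∑_{m ≥ 1} (2m(k_{1,n+m}+k_{2,n+m}) + (2m-1)(k_{3,n+m}+k_{4,n+m}))`,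
where `k i n` encodes the paper's `k_{i+1, n+1}`. -/
noncomputable def S1 (k : Fin 4 → ℕ → ℕ) (n : ℕ) : ℤ :=
  ∑ᶠ m : ℕ, ((2 * ((m : ℤ) + 1)) * ((k 0 (n + m + 1) : ℤ) + (k 1 (n + m + 1) : ℤ))
    + (2 * ((m : ℤ) + 1) - 1) * ((k 2 (n + m + 1) : ℤ) + (k 3 (n + m + 1) : ℤ)))

/-- Inner sum `∑_{m ≥ 0} ((2m+1)(k_{1,n+m}+k_{2,n+m}) + 2m(k_{3,n+m}+k_{4,n+m}))`. -/
noncomputable def S2 (k : Fin 4 → ℕ → ℕ) (n : ℕ) : ℤ :=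
  ∑ᶠ m : ℕ, ((2 * (m : ℤ) + 1) * ((k 0 (n + m) : ℤ) + (k 1 (n + m) : ℤ))
    + 2 * (m : ℤ) * ((k 2 (n + m) : ℤ) + (k 3 (n + m) : ℤ)))

/-- Least `N` beyond which the family `k` vanishes. -/
noncomputable def supBound (k : Fin 4 → ℕ → ℕ) : ℕ :=
  sInf {N | ∀ (i : Fin 4) (n : ℕ), N ≤ n → k i n = 0}

/-- The product of symmetric `q`-binomials attached to a family `(k_{i,n})`. -/
noncomputable def termG (t : RatFunc ℚ) (e : ℤ) (k : Fin 4 → ℕ → ℕ) : RatFunc ℚ :=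
  ∏ n ∈ Finset.range (supBound k),
    (qbinom t (e - S1 k n) (k 0 n) * qbinom t (e - S1 k n) (k 1 n) *
     qbinom t (e - S2 k n) (k 2 n) * qbinom t (e - S2 k n) (k 3 n))

/-- A finitely supported family `(k_{i,n})_{1≤i≤4, n≥1}` is admissible for `(a,b,c,d)` if
`a = ∑ (n+δ_{i,1}) k_{i,n}`, `b = ∑ k_{i,n}`, `c = ∑ (k_{1,n}+k_{4,n})`,
`d = ∑ (k_{1,n}+k_{3,n})`.  Here `k i n` encodes the paper's `k_{i+1, n+1}`. -/
def Admissible (a b c d : ℤ) (k : Fin 4 → ℕ → ℕ) : Prop :=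
  {p : Fin 4 × ℕ | k p.1 p.2 ≠ 0}.Finite ∧
  a = ∑ᶠ n : ℕ, (((n : ℤ) + 2) * (k 0 n : ℤ)
      + ((n : ℤ) + 1) * ((k 1 n : ℤ) + (k 2 n : ℤ) + (k 3 n : ℤ))) ∧
  b = ∑ᶠ n : ℕ, ((k 0 n : ℤ) + (k 1 n : ℤ) + (k 2 n : ℤ) + (k 3 n : ℤ)) ∧
  c = ∑ᶠ n : ℕ, ((k 0 n : ℤ) + (k 3 n : ℤ)) ∧
  d = ∑ᶠ n : ℕ, ((k 0 n : ℤ) + (k 2 n : ℤ))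

open Classical in
/-- The multivariate `q`-binomial sum `G(a,b,c,d,e)` of the paper. -/
noncomputable def G (t : RatFunc ℚ) (a b c d e : ℤ) : RatFunc ℚ :=
  ∑ᶠ k : Fin 4 → ℕ → ℕ, if Admissible a b c d k then termG t e k else 0


/-!
Peel off the first layer `(k_{i,1})_i` of a family: `k ↦ (k_{1,1}, …, k_{4,1}, shifted family)` is a
bijection. Removing the first layer and shifting `n ↦ n - 1` lowers `a` by `b + k₁`, so the family
is admissible for `(a, b, c, d)` exactly when the shifted one is admissible for
`(a - b - k₁, b - k₁ - k₂ - k₃ - k₄, c - k₁ - k₄, d - k₁ - k₃)`. The inner sums of the first layer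
are linear combinations of these constraints, `S₂ = 2a - b - c - d` and
`S₁ = 2a - 2b - c - d + k₃ + k₄`, while the inner sums of the later layers are those of the shifted
family. Since `b > 0` the family is nonzero, so its product has exactly one more factor than that
of the shifted family, and that factor is the summand of the recursion.
-/

open Function

namespace QBinomialRecursion

lemma finsum_nat_eq_add_finsum_succ {M : Type*} [AddCommMonoid M] {f : ℕ → M}
    (hf : HasFiniteSupport f) : ∑ᶠ n, f n = f 0 + ∑ᶠ n, f (n + 1) := by
  have hnot : (0 : ℕ) ∉ Set.range Nat.succ := fun ⟨_, h⟩ => Nat.succ_ne_zero _ h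
  rw [← finsum_mem_univ, ← Nat.zero_union_range_succ, Set.singleton_union,
    finsum_mem_insert' f hnot (hf.subset Set.inter_subset_right),
    finsum_mem_range Nat.succ_injective]

lemma finsum_curry₅ {α β γ δ ε M : Type*} [AddCommMonoid M] (f : α × β × γ × δ × ε → M)
    (hf : HasFiniteSupport f) :
    ∑ᶠ p, f p = ∑ᶠ (a) (b) (c) (d) (e), f (a, b, c, d, e) := by
  rw [finsum_curry f hf]
  refine finsum_congr fun a => ?_
  rw [finsum_curry₃ (fun p => f (a, p)) (hf.comp_of_injective (Prod.mk_right_injective a))]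
  refine finsum_congr fun b => finsum_congr fun c => ?_
  exact finsum_curry _ (hf.comp_of_injective fun x y h => by simpa using h)

section Families

variable {ι : Type*}

lemma finite_support_iff_exists_vanishing [Finite ι] {k : ι → ℕ → ℕ} :
    {p : ι × ℕ | k p.1 p.2 ≠ 0}.Finite ↔ ∃ N, ∀ i n, N ≤ n → k i n = 0 := by
  constructor
  · intro hk
    obtain ⟨N, hN⟩ := (hk.image Prod.snd).bddAbove
    refine ⟨N + 1, fun i n hn => ?_⟩
    by_contra h
    have := hN ⟨(i, n), h, rfl⟩
    omega
  · rintro ⟨N, hN⟩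
    refine (Set.finite_univ.prod (Set.finite_Iio N)).subset fun p hp => ?_
    exact ⟨trivial, Set.mem_Iio.2 (not_le.1 fun h => hp (hN p.1 p.2 h))⟩

lemma finite_setOf_bounded [Finite ι] (A B : ℕ) :
    {k : ι → ℕ → ℕ | ∀ i n, k i n ≤ B ∧ (A ≤ n → k i n = 0)}.Finite := by
  let restrict : (ι → ℕ → ℕ) → ι × Fin A → ℕ := fun k p => k p.1 p.2
  refine Set.Finite.of_finite_image (f := restrict) ?_ fun k hk k' hk' h => ?_
  · refine (Set.Finite.pi' fun _ => Set.finite_Iic B).subset ?_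
    rintro _ ⟨k, hk, rfl⟩ p
    exact (hk p.1 p.2).1
  · funext i n
    by_cases hn : n < A
    · exact congrFun h (i, ⟨n, hn⟩)
    · rw [(hk i n).2 (by omega), (hk' i n).2 (by omega)]

def prepend (v : ι → ℕ) (k : ι → ℕ → ℕ) : ι → ℕ → ℕ :=
  fun i n => Nat.casesOn n (v i) (k i)

@[simp] lemma prepend_succ (v : ι → ℕ) (k : ι → ℕ → ℕ) (i : ι) (n : ℕ) :
    prepend v k i (n + 1) = k i n := rfl

lemma finite_support_prepend_iff [Finite ι] {v : ι → ℕ} {k : ι → ℕ → ℕ} :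
    {p : ι × ℕ | prepend v k p.1 p.2 ≠ 0}.Finite ↔ {p : ι × ℕ | k p.1 p.2 ≠ 0}.Finite := by
  simp only [finite_support_iff_exists_vanishing]
  constructor
  · rintro ⟨N, hN⟩
    exact ⟨N, fun i n hn => hN i (n + 1) (by omega)⟩
  · rintro ⟨N, hN⟩
    refine ⟨N + 1, fun i n hn => ?_⟩
    obtain ⟨n, rfl⟩ : ∃ m, n = m + 1 := ⟨n - 1, by omega⟩
    exact hN i n (by omega)

lemma S1_prepend_succ (v : Fin 4 → ℕ) (k : Fin 4 → ℕ → ℕ) (n : ℕ) :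
    S1 (prepend v k) (n + 1) = S1 k n := by
  simp only [S1, Nat.add_right_comm n 1, prepend_succ]

lemma S2_prepend_succ (v : Fin 4 → ℕ) (k : Fin 4 → ℕ → ℕ) (n : ℕ) :
    S2 (prepend v k) (n + 1) = S2 k n := by
  simp only [S2, Nat.add_right_comm n 1, prepend_succ]

end Families

section WeightedSum

variable {ι : Type*} [Fintype ι]

noncomputable def weightedSum (w : ℕ → ι → ℤ) (k : ι → ℕ → ℕ) : ℤ := ∑ᶠ n, ∑ i, w n i * k i n

variable {k : ι → ℕ → ℕ}

lemma hasFiniteSupport_weightedSum (hk : {p : ι × ℕ | k p.1 p.2 ≠ 0}.Finite) (w : ℕ → ι → ℤ) :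
    HasFiniteSupport fun n => ∑ i, w n i * k i n := by
  refine (hk.image Prod.snd).subset fun n hn => ?_
  obtain ⟨i, -, hi⟩ := Finset.exists_ne_zero_of_sum_ne_zero hn
  exact ⟨(i, n), fun h => hi (by simp [show k i n = 0 from h]), rfl⟩

lemma weightedSum_add (hk : {p : ι × ℕ | k p.1 p.2 ≠ 0}.Finite) (w w' : ℕ → ι → ℤ) :
    weightedSum (w + w') k = weightedSum w k + weightedSum w' k := by
  simp only [weightedSum, Pi.add_apply, add_mul, Finset.sum_add_distrib]
  exact finsum_add_distrib (hasFiniteSupport_weightedSum hk w) (hasFiniteSupport_weightedSum hk w')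

lemma weightedSum_sub (hk : {p : ι × ℕ | k p.1 p.2 ≠ 0}.Finite) (w w' : ℕ → ι → ℤ) :
    weightedSum (w - w') k = weightedSum w k - weightedSum w' k := by
  simp only [weightedSum, Pi.sub_apply, sub_mul, Finset.sum_sub_distrib]
  exact finsum_sub_distrib (hasFiniteSupport_weightedSum hk w) (hasFiniteSupport_weightedSum hk w')

lemma weightedSum_smul (r : ℤ) (w : ℕ → ι → ℤ) :
    weightedSum (r • w) k = r * weightedSum w k := by
  simp only [weightedSum, Pi.smul_apply, smul_eq_mul, mul_assoc, ← Finset.mul_sum, mul_finsum]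

lemma single_le_weightedSum (hk : {p : ι × ℕ | k p.1 p.2 ≠ 0}.Finite) {w : ℕ → ι → ℤ}
    (hw : ∀ n i, 0 ≤ w n i) (i : ι) (n : ℕ) : w n i * k i n ≤ weightedSum w k := by
  have hterm : ∀ n j, 0 ≤ w n j * k j n := fun n j => mul_nonneg (hw n j) (Nat.cast_nonneg _)
  calc w n i * k i n ≤ ∑ j, w n j * k j n :=
        Finset.single_le_sum (fun j _ => hterm n j) (Finset.mem_univ i)
    _ ≤ weightedSum w k :=
        single_le_finsum n (hasFiniteSupport_weightedSum hk w)
          fun n => Finset.sum_nonneg fun j _ => hterm n j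

lemma weightedSum_prepend (hk : {p : ι × ℕ | k p.1 p.2 ≠ 0}.Finite) (w : ℕ → ι → ℤ)
    (v : ι → ℕ) :
    weightedSum w (prepend v k) = ∑ i, w 0 i * v i + weightedSum (fun n => w (n + 1)) k :=
  finsum_nat_eq_add_finsum_succ
    (hasFiniteSupport_weightedSum (finite_support_prepend_iff.2 hk) w)

end WeightedSum

section Admissible

def weightA (n : ℕ) : Fin 4 → ℤ := ![n + 2, n + 1, n + 1, n + 1]

def weightB (_ : ℕ) : Fin 4 → ℤ := 1

def weightC (_ : ℕ) : Fin 4 → ℤ := ![1, 0, 0, 1]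

def weightD (_ : ℕ) : Fin 4 → ℤ := ![1, 0, 1, 0]

lemma admissible_iff_weightedSum {a b c d : ℤ} {k : Fin 4 → ℕ → ℕ} :
    Admissible a b c d k ↔ {p : Fin 4 × ℕ | k p.1 p.2 ≠ 0}.Finite ∧
      a = weightedSum weightA k ∧ b = weightedSum weightB k ∧
      c = weightedSum weightC k ∧ d = weightedSum weightD k := by
  simp [Admissible, weightedSum, Fin.sum_univ_four, weightA, weightB, weightC, weightD, mul_add,
    add_assoc]

lemma weightA_succ : (fun n => weightA (n + 1)) = weightA + weightB := by
  funext n i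
  fin_cases i <;> simp [weightA, weightB, add_assoc]

lemma admissible_prepend_iff (a b c d : ℤ) (v : Fin 4 → ℕ) (k : Fin 4 → ℕ → ℕ) :
    Admissible a b c d (prepend v k) ↔
      Admissible (a - b - v 0) (b - v 0 - v 1 - v 2 - v 3) (c - v 0 - v 3) (d - v 0 - v 2) k := by
  rw [admissible_iff_weightedSum, admissible_iff_weightedSum, finite_support_prepend_iff]
  refine and_congr_right fun hk => ?_
  obtain ⟨hB, hC, hD⟩ : (fun n => weightB (n + 1)) = weightB ∧
      (fun n => weightC (n + 1)) = weightC ∧ (fun n => weightD (n + 1)) = weightD :=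
    ⟨rfl, rfl, rfl⟩
  simp only [weightedSum_prepend hk, weightA_succ, hB, hC, hD, weightedSum_add hk,
    Fin.sum_univ_four]
  simp [weightA, weightB, weightC, weightD]
  omega

lemma finite_setOf_admissible (a b c d : ℤ) : {k | Admissible a b c d k}.Finite := by
  refine (finite_setOf_bounded (a.toNat + 1) b.toNat).subset fun k h i n => ?_
  obtain ⟨hk, ha, hb, -, -⟩ := admissible_iff_weightedSum.1 h
  have hkb := single_le_weightedSum hk (w := weightB) (fun _ _ => zero_le_one) i n
  have hka := single_le_weightedSum hk (w := weightA) (fun n i => by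
    fin_cases i <;> simp [weightA] <;> positivity) i n
  have hwa : (n : ℤ) + 1 ≤ weightA n i := by fin_cases i <;> simp [weightA]
  simp only [weightB, Pi.one_apply, one_mul] at hkb
  refine ⟨by omega, fun hn => ?_⟩
  by_contra hne
  have : weightA n i ≤ weightA n i * k i n :=
    le_mul_of_one_le_right (by omega) (by exact_mod_cast Nat.one_le_iff_ne_zero.2 hne)
  omega

lemma exists_ne_zero_of_admissible {a b c d : ℤ} {k : Fin 4 → ℕ → ℕ}
    (h : Admissible a b c d k) (hb : b ≠ 0) : ∃ i n, k i n ≠ 0 := by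
  by_contra! hzero
  exact hb (by simpa [hzero] using h.2.2.1)

lemma S2_zero_of_admissible {a b c d : ℤ} {k : Fin 4 → ℕ → ℕ} (h : Admissible a b c d k) :
    S2 k 0 = 2 * a - b - c - d := by
  obtain ⟨hk, rfl, rfl, rfl, rfl⟩ := admissible_iff_weightedSum.1 h
  have : S2 k 0 = weightedSum ((2 : ℤ) • weightA - weightB - weightC - weightD) k :=
    finsum_congr fun n => by
      simp only [Pi.sub_apply, Pi.smul_apply, smul_eq_mul, Fin.sum_univ_four]
      simp [weightA, weightB, weightC, weightD]
      ring
  rw [this, weightedSum_sub hk, weightedSum_sub hk, weightedSum_sub hk, weightedSum_smul]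

lemma S1_prepend_zero_of_admissible {a b c d : ℤ} {k : Fin 4 → ℕ → ℕ}
    (h : Admissible a b c d k) (v : Fin 4 → ℕ) : S1 (prepend v k) 0 = 2 * a - c - d := by
  obtain ⟨hk, rfl, -, rfl, rfl⟩ := admissible_iff_weightedSum.1 h
  have : S1 (prepend v k) 0 = weightedSum ((2 : ℤ) • weightA - weightC - weightD) k :=
    finsum_congr fun n => by
      simp only [Pi.sub_apply, Pi.smul_apply, smul_eq_mul, Fin.sum_univ_four]
      simp [weightA, weightC, weightD]
      ring
  rw [this, weightedSum_sub hk, weightedSum_sub hk, weightedSum_smul]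

end Admissible

section Product

variable {v : Fin 4 → ℕ} {k : Fin 4 → ℕ → ℕ}

lemma supBound_le_iff (hk : {p : Fin 4 × ℕ | k p.1 p.2 ≠ 0}.Finite) {N : ℕ} :
    supBound k ≤ N ↔ ∀ i n, N ≤ n → k i n = 0 :=
  ⟨fun h i n hn => Nat.sInf_mem (finite_support_iff_exists_vanishing.1 hk) i n (h.trans hn),
    fun h => Nat.sInf_le h⟩

lemma supBound_prepend (hk : {p : Fin 4 × ℕ | k p.1 p.2 ≠ 0}.Finite)
    (hne : ∃ i n, prepend v k i n ≠ 0) : supBound (prepend v k) = supBound k + 1 := by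
  refine eq_of_forall_ge_iff fun N => ?_
  rw [supBound_le_iff (finite_support_prepend_iff.2 hk)]
  cases N with
  | zero => simpa using hne
  | succ N =>
    rw [Nat.add_le_add_iff_right, supBound_le_iff hk]
    refine ⟨fun h i n hn => h i (n + 1) (by omega), fun h i n hn => ?_⟩
    obtain ⟨n, rfl⟩ : ∃ m, n = m + 1 := ⟨n - 1, by omega⟩
    exact h i n (by omega)

noncomputable def layerFactor (t : RatFunc ℚ) (e : ℤ) (k : Fin 4 → ℕ → ℕ) (n : ℕ) :
    RatFunc ℚ :=
  qbinom t (e - S1 k n) (k 0 n) * qbinom t (e - S1 k n) (k 1 n) *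
    qbinom t (e - S2 k n) (k 2 n) * qbinom t (e - S2 k n) (k 3 n)

lemma termG_prepend (t : RatFunc ℚ) (e : ℤ) (hk : {p : Fin 4 × ℕ | k p.1 p.2 ≠ 0}.Finite)
    (hne : ∃ i n, prepend v k i n ≠ 0) :
    termG t e (prepend v k) = layerFactor t e (prepend v k) 0 * termG t e k := by
  rw [termG, supBound_prepend hk hne, Finset.prod_range_succ', mul_comm]
  simp only [S1_prepend_succ, S2_prepend_succ, prepend_succ]
  rfl

end Product

open Classical in
lemma finsum_admissible_prepend (t : RatFunc ℚ) {a b : ℤ} (c d e : ℤ) (hb : b ≠ 0)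
    (v : Fin 4 → ℕ) :
    (∑ᶠ k, if Admissible a b c d (prepend v k) then termG t e (prepend v k) else 0) =
      qbinom t (e - 2*a + 2*b + c + d - v 2 - v 3) (v 0) *
        qbinom t (e - 2*a + 2*b + c + d - v 2 - v 3) (v 1) *
        qbinom t (e - 2*a + b + c + d) (v 2) * qbinom t (e - 2*a + b + c + d) (v 3) *
        G t (a - b - v 0) (b - v 0 - v 1 - v 2 - v 3) (c - v 0 - v 3) (d - v 0 - v 2) e := by
  rw [G, mul_finsum]
  refine finsum_congr fun k => ?_
  by_cases hk : Admissible (a - b - v 0) (b - v 0 - v 1 - v 2 - v 3) (c - v 0 - v 3)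
    (d - v 0 - v 2) k
  · have hK := (admissible_prepend_iff a b c d v k).2 hk
    rw [if_pos hK, if_pos hk, termG_prepend t e hk.1 (exists_ne_zero_of_admissible hK hb),
      layerFactor, S1_prepend_zero_of_admissible hk, S2_zero_of_admissible hK]
    congr 5 <;> ring
  · rw [if_neg (mt (admissible_prepend_iff a b c d v k).1 hk), if_neg hk, mul_zero]

def prependEquiv : ℕ × ℕ × ℕ × ℕ × (Fin 4 → ℕ → ℕ) ≃ (Fin 4 → ℕ → ℕ) where
  toFun p := prepend ![p.1, p.2.1, p.2.2.1, p.2.2.2.1] p.2.2.2.2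
  invFun k := (k 0 0, k 1 0, k 2 0, k 3 0, fun i n => k i (n + 1))
  left_inv _ := rfl
  right_inv k := by
    funext i n
    fin_cases i <;> cases n <;> rfl

end QBinomialRecursion

open QBinomialRecursion

theorem stmt6_general (a b c d e : ℤ) (hb : 0 < b) :
    G RatFunc.X a b c d e =
      ∑ᶠ k₁ : ℕ, ∑ᶠ k₂ : ℕ, ∑ᶠ k₃ : ℕ, ∑ᶠ k₄ : ℕ,
        qbinom RatFunc.X (e - 2*a + 2*b + c + d - (k₃ : ℤ) - (k₄ : ℤ)) (k₁ : ℤ) *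
        qbinom RatFunc.X (e - 2*a + 2*b + c + d - (k₃ : ℤ) - (k₄ : ℤ)) (k₂ : ℤ) *
        qbinom RatFunc.X (e - 2*a + b + c + d) (k₃ : ℤ) *
        qbinom RatFunc.X (e - 2*a + b + c + d) (k₄ : ℤ) *
        G RatFunc.X (a - b - k₁) (b - k₁ - k₂ - k₃ - k₄) (c - k₁ - k₄)
          (d - k₁ - k₃) e := by
  classical
  have hfin : HasFiniteSupport fun p => if Admissible a b c d (prependEquiv p)
      then termG RatFunc.X e (prependEquiv p) else 0 :=
    ((finite_setOf_admissible a b c d).preimage prependEquiv.injective.injOn).subset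
      fun p hp => by_contra fun h => hp (if_neg h)
  rw [G, ← finsum_comp_equiv prependEquiv, finsum_curry₅ _ hfin]
  refine finsum_congr fun k₁ => finsum_congr fun k₂ => finsum_congr fun k₃ =>
    finsum_congr fun k₄ => ?_
  exact finsum_admissible_prepend RatFunc.X c d e hb.ne' ![k₁, k₂, k₃, k₄]

theorem stmt6 (a b c d e : ℤ) (ha : 0 < a) (hb : 0 < b) (hc : 0 ≤ c) (hd : 0 ≤ d) :
    G RatFunc.X a b c d e =
      ∑ᶠ k₁ : ℕ, ∑ᶠ k₂ : ℕ, ∑ᶠ k₃ : ℕ, ∑ᶠ k₄ : ℕ,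
        qbinom RatFunc.X (e - 2*a + 2*b + c + d - (k₃ : ℤ) - (k₄ : ℤ)) (k₁ : ℤ) *
        qbinom RatFunc.X (e - 2*a + 2*b + c + d - (k₃ : ℤ) - (k₄ : ℤ)) (k₂ : ℤ) *
        qbinom RatFunc.X (e - 2*a + b + c + d) (k₃ : ℤ) *
        qbinom RatFunc.X (e - 2*a + b + c + d) (k₄ : ℤ) *
        G RatFunc.X (a - b - k₁) (b - k₁ - k₂ - k₃ - k₄) (c - k₁ - k₄)
          (d - k₁ - k₃) e :=
  stmt6_general a b c d e hb
end

section
/- For positive integers $d_0, d_1, d_2, d_3$ with $d_1 \leq d_0$, $d_2 \leq d_0$, $d_3 \leq d_0 \leq d_1 + d_3$, $d_0 \leq d_2 + d_3$, and $d_3 \leq d_1 + d_2 + d_3 - d_0$, the expression $\frac{[d_1]_q\,[d_2+d_3]_q}{[d_0]_q\,[d_1+d_2+d_3-d_0]_q}\genfrac{[}{]}{0pt}{}{d_3}{d_0-d_1}_q \genfrac{[}{]}{0pt}{}{d_3}{d_0-d_2}_q \genfrac{[}{]}{0pt}{}{d_0}{d_3}_q \genfrac{[}{]}{0pt}{}{d_1+d_2+d_3-d_0}{d_3}_q$,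 a priori an element of $\mathbb{Q}(q^{1/2})$, lies in $\mathbb{Z}[q^{1/2}, q^{-1/2}]$ (it is a Laurent polynomial with zeroes and poles only at $q = 0$, $\infty$, or roots of unity — in fact a Laurent polynomial). -/
/-!
With `t = q^{1/2}` we have `[n]_q = (t^{2n} - 1) / t^n`. After the two factors `[d₃]_q!` cancel,
the expression is a power of `t` times a ratio of products of polynomials `t^{2n} - 1`, with `n`
running over `{d₁, d₂ + d₃} ∪ [1, d₀] ∪ [1, s]` upstairs and over
`{d₀, s} ∪ [1, d₀ - d₁] ∪ [1, d₁ + d₃ - d₀] ∪ [1, d₀ - d₂] ∪ [1, d₂ + d₃ - d₀] ∪ [1, d₀ - d₃] ∪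
[1, d₁ + d₂ - d₀]` downstairs, where `s = d₁ + d₂ + d₃ - d₀`. As `X^n - 1 = ∏_{m ∣ n} Φ_m`, such a
ratio is a polynomial as soon as every `m` divides at least as many indices upstairs as downstairs.
This is a floor-function inequality in the style of Landau's criterion for factorial ratios.
-/

open Polynomial

theorem Nat.dvd_or_div_add_div_lt {m x y z : ℕ} (hm : 0 < m) (h : x + y = z) (hz : m ∣ z) :
    m ∣ x ∨ x / m + y / m < z / m := by
  subst h
  have hmod := Nat.add_mod_add_ite x y m
  rw [Nat.add_div hm, Nat.dvd_iff_mod_eq_zero] at *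
  split_ifs at hmod ⊢ <;> omega

/-- In the application `a₀, a₁, a₃ = d₀, d₁, d₃`, `e = d₂ + d₃`, `s = d₁ + d₂ + d₃ - d₀`,
`u₁ = d₀ - d₁`, `v₁ = d₁ + d₃ - d₀`, `u₂ = d₀ - d₂`, `v₂ = d₂ + d₃ - d₀`, `w = d₀ - d₃` and
`c = d₁ + d₂ - d₀`. Without a carry modulo `m` in one of the four additions `hw`, `hc`, `h₁`, `h₂`
whose sum is divisible by `m`, the summands are divisible by `m`, and `ha₁`, `he`, `hs` pass this
on to `a₁` or `e`. -/
theorem landau_inequality {m a₀ a₁ a₃ e s u₁ v₁ u₂ v₂ w c : ℕ} (hm : 0 < m)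
    (hw : a₃ + w = a₀) (hc : a₃ + c = s) (h₁ : u₁ + v₁ = a₃) (h₂ : u₂ + v₂ = a₃)
    (ha₁ : u₁ + a₁ = a₀) (he : a₀ + v₂ = e) (hs : s + u₁ = e) :
    (if m ∣ a₀ then 1 else 0) + (if m ∣ s then 1 else 0) +
        u₁ / m + v₁ / m + u₂ / m + v₂ / m + w / m + c / m ≤
      (if m ∣ a₁ then 1 else 0) + (if m ∣ e then 1 else 0) + a₀ / m + s / m := by
  have l₀ := hw ▸ Nat.div_add_div_le_add_div (x := a₃) (y := w) (z := m)
  have lₛ := hc ▸ Nat.div_add_div_le_add_div (x := a₃) (y := c) (z := m)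
  have l₁ := h₁ ▸ Nat.div_add_div_le_add_div (x := u₁) (y := v₁) (z := m)
  have l₂ := h₂ ▸ Nat.div_add_div_le_add_div (x := u₂) (y := v₂) (z := m)
  have c₀ := Nat.dvd_or_div_add_div_lt hm hw
  have cₛ := Nat.dvd_or_div_add_div_lt hm hc
  have c₁ := Nat.dvd_or_div_add_div_lt hm h₁
  have c₂ := Nat.dvd_or_div_add_div_lt hm h₂
  have e₁ : m ∣ a₀ → m ∣ u₁ → m ∣ a₁ := fun h₀ hu => (Nat.dvd_add_right hu).1 (ha₁ ▸ h₀)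
  have e₂ : m ∣ a₀ → m ∣ a₃ → m ∣ u₂ → m ∣ e := fun h₀ h₃ hu =>
    he ▸ dvd_add h₀ ((Nat.dvd_add_right hu).1 (h₂ ▸ h₃))
  have e₃ : m ∣ s → m ∣ u₁ → m ∣ e := fun hs' hu => hs ▸ dvd_add hs' hu
  simp only [Nat.dvd_iff_mod_eq_zero] at *
  split_ifs <;> omega

namespace Polynomial

variable (R : Type*) [CommRing R]

theorem X_pow_sub_one_eq_prod_cyclotomic_pow {n M : ℕ} (hn : 0 < n) (hnM : n ≤ M) :
    (X ^ n - 1 : R[X]) = ∏ d ∈ Finset.Icc 1 M, cyclotomic d R ^ (if d ∣ n then 1 else 0) := by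
  have hdiv : n.divisors = (Finset.Icc 1 M).filter (· ∣ n) := by
    ext d
    simp only [Nat.mem_divisors, Finset.mem_filter, Finset.mem_Icc]
    constructor
    · rintro ⟨hd, -⟩
      exact ⟨⟨Nat.pos_of_dvd_of_pos hd hn, (Nat.le_of_dvd hn hd).trans hnM⟩, hd⟩
    · rintro ⟨-, hd⟩
      exact ⟨hd, hn.ne'⟩
  simp only [pow_ite, pow_one, pow_zero]
  rw [← Finset.prod_filter, ← hdiv, prod_cyclotomic_eq_X_pow_sub_one hn]

theorem prod_X_pow_sub_one_eq_prod_cyclotomic_pow {A : Multiset ℕ} {M : ℕ}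
    (hA : ∀ n ∈ A, 0 < n ∧ n ≤ M) :
    (A.map fun n => (X ^ n - 1 : R[X])).prod =
      ∏ d ∈ Finset.Icc 1 M, cyclotomic d R ^ A.countP (d ∣ ·) := by
  induction A using Multiset.induction_on with
  | empty => simp
  | cons a A ih =>
    obtain ⟨ha, haM⟩ := hA a (Multiset.mem_cons_self a A)
    simp only [Multiset.map_cons, Multiset.prod_cons, Multiset.countP_cons, pow_add,
      Finset.prod_mul_distrib, ih fun n hn => hA n (Multiset.mem_cons_of_mem hn),
      X_pow_sub_one_eq_prod_cyclotomic_pow R ha haM, mul_comm]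

theorem prod_X_pow_sub_one_dvd_prod {A B : Multiset ℕ} (hA : 0 ∉ A)
    (hAB : ∀ d, 0 < d → A.countP (d ∣ ·) ≤ B.countP (d ∣ ·)) :
    (A.map fun n => (X ^ n - 1 : R[X])).prod ∣ (B.map fun n => (X ^ n - 1 : R[X])).prod := by
  by_cases hB : 0 ∈ B
  · rw [Multiset.prod_eq_zero (Multiset.mem_map.2 ⟨0, hB, by simp⟩)]
    exact dvd_zero _
  have bound : ∀ C ≤ A + B, 0 ∉ C → ∀ n ∈ C, 0 < n ∧ n ≤ (A + B).sum := fun C hC h0 n hn =>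
    ⟨Nat.pos_of_ne_zero (ne_of_mem_of_not_mem hn h0),
      Multiset.le_sum_of_mem (Multiset.mem_of_le hC hn)⟩
  rw [prod_X_pow_sub_one_eq_prod_cyclotomic_pow R (bound A (Multiset.le_add_right A B) hA),
    prod_X_pow_sub_one_eq_prod_cyclotomic_pow R (bound B (Multiset.le_add_left B A) hB)]
  exact Finset.prod_dvd_prod_of_dvd _ _ fun d hd =>
    pow_dvd_pow _ (hAB d (Finset.mem_Icc.1 hd).1)

theorem prod_X_pow_two_mul_sub_one_eq_expand (A : Multiset ℕ) :
    (A.map fun n => (X ^ (2 * n) - 1 : R[X])).prod =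
      expand R 2 (A.map fun n => (X ^ n - 1 : R[X])).prod := by
  simp [map_multiset_prod, Multiset.map_map, pow_mul]

end Polynomial

noncomputable def ofIntPoly : ℤ[X] →+* RatFunc ℚ :=
  (algebraMap ℚ[X] (RatFunc ℚ)).comp (mapRingHom (Int.castRingHom ℚ))

theorem ofIntPoly_injective : Function.Injective ofIntPoly :=
  (RatFunc.algebraMap_injective ℚ).comp (map_injective _ (Int.castRingHom ℚ).injective_int)

@[simp]
theorem ofIntPoly_X : ofIntPoly X = RatFunc.X := by
  simp [ofIntPoly, RatFunc.algebraMap_X]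

theorem qint_X_natCast (n : ℕ) :
    qint RatFunc.X n = ofIntPoly (X ^ (2 * n) - 1) / RatFunc.X ^ n := by
  have hX : (RatFunc.X : RatFunc ℚ) ^ n ≠ 0 := pow_ne_zero n RatFunc.X_ne_zero
  rw [qint, zpow_neg, zpow_natCast, eq_div_iff hX, sub_mul, inv_mul_cancel₀ hX, ← pow_add,
    two_mul]
  simp

theorem qint_X_ne_zero {n : ℕ} (hn : n ≠ 0) : qint RatFunc.X n ≠ 0 := by
  have hpoly : (X ^ (2 * n) - 1 : ℤ[X]) ≠ 0 := by
    simpa using (monic_X_pow_sub_C (1 : ℤ) (by omega : 2 * n ≠ 0)).ne_zero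
  rw [qint_X_natCast]
  exact div_ne_zero ((map_ne_zero_iff _ ofIntPoly_injective).2 hpoly)
    (pow_ne_zero n RatFunc.X_ne_zero)

theorem qfact_eq_prod_Ioc (t : RatFunc ℚ) (n : ℤ) :
    qfact t n = ∏ k ∈ Finset.Ioc 0 n.toNat, qint t k := by
  rw [qfact]
  induction n.toNat with
  | zero => simp
  | succ n ih =>
    rw [Finset.prod_range_succ, ih, Finset.prod_Ioc_succ_top n.zero_le]
    push_cast
    rfl

theorem qbinom_of_le (t : RatFunc ℚ) {n m : ℤ} (hm : 0 ≤ m) (hmn : m ≤ n) :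
    qbinom t n m = qfact t n / (qfact t m * qfact t (n - m)) :=
  if_pos ⟨hm, hmn⟩

noncomputable def qintProd (A : Multiset ℕ) : RatFunc ℚ :=
  (A.map fun n : ℕ => qint RatFunc.X n).prod

theorem qintProd_add (A B : Multiset ℕ) : qintProd (A + B) = qintProd A * qintProd B := by
  simp [qintProd]

theorem qintProd_singleton (n : ℕ) : qintProd {n} = qint RatFunc.X n := by
  simp [qintProd]

theorem qfact_X (n : ℤ) : qfact RatFunc.X n = qintProd (Multiset.Ioc 0 n.toNat) := by
  rw [qfact_eq_prod_Ioc]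
  rfl

theorem qint_X_of_nonneg {n : ℤ} (hn : 0 ≤ n) : qint RatFunc.X n = qintProd {n.toNat} := by
  rw [qintProd_singleton, Int.toNat_of_nonneg hn]

theorem qintProd_ne_zero {A : Multiset ℕ} (hA : 0 ∉ A) : qintProd A ≠ 0 :=
  Multiset.prod_ne_zero fun h => by
    obtain ⟨n, hn, hzero⟩ := Multiset.mem_map.1 h
    exact qint_X_ne_zero (ne_of_mem_of_not_mem hn hA) hzero

theorem qintProd_eq (A : Multiset ℕ) :
    qintProd A =
      ofIntPoly (A.map fun n => (X ^ (2 * n) - 1 : ℤ[X])).prod / RatFunc.X ^ A.sum := by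
  induction A using Multiset.induction_on with
  | empty => simp [qintProd]
  | cons a A ih =>
    rw [← Multiset.singleton_add, qintProd_add, ih, qintProd_singleton, qint_X_natCast]
    simp only [Multiset.map_add, Multiset.prod_add, Multiset.map_singleton,
      Multiset.prod_singleton, Multiset.sum_add, Multiset.sum_singleton, map_mul, pow_add]
    ring

theorem exists_qintProd_div_eq_laurent {A B : Multiset ℕ} (hA : 0 ∉ A)
    (hAB : ∀ d, 0 < d → A.countP (d ∣ ·) ≤ B.countP (d ∣ ·)) :
    ∃ (p : ℤ[X]) (N : ℕ), qintProd B / qintProd A = ofIntPoly p / RatFunc.X ^ N := by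
  obtain ⟨q, hq⟩ := prod_X_pow_sub_one_dvd_prod ℤ hA hAB
  have hA' := qintProd_ne_zero hA
  refine ⟨expand ℤ 2 q * X ^ A.sum, B.sum, ?_⟩
  rw [qintProd_eq, prod_X_pow_two_mul_sub_one_eq_expand] at hA' ⊢
  rw [qintProd_eq, prod_X_pow_two_mul_sub_one_eq_expand, hq, map_mul, map_mul, map_mul, map_pow,
    ofIntPoly_X]
  have hX : (RatFunc.X : RatFunc ℚ) ^ A.sum ≠ 0 := pow_ne_zero _ RatFunc.X_ne_zero
  have hP := (div_ne_zero_iff.1 hA').1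
  field_simp

theorem countP_dvd_Ioc (n d : ℕ) : (Multiset.Ioc 0 n).countP (d ∣ ·) = n / d := by
  rw [Multiset.countP_eq_card_filter]
  exact Nat.Ioc_filter_dvd_card_eq_div n d

theorem exists_qint_qfact_ratio_eq_laurent {a₀ a₁ a₃ e s u₁ v₁ u₂ v₂ w c : ℕ} (ha₀ : a₀ ≠ 0)
    (hw : a₃ + w = a₀) (hc : a₃ + c = s) (h₁ : u₁ + v₁ = a₃) (h₂ : u₂ + v₂ = a₃)
    (ha₁ : u₁ + a₁ = a₀) (he : a₀ + v₂ = e) (hs : s + u₁ = e) :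
    ∃ (p : ℤ[X]) (N : ℕ),
      qintProd {a₁} * qintProd {e} / (qintProd {a₀} * qintProd {s}) *
        (qintProd (Multiset.Ioc 0 a₃) /
              (qintProd (Multiset.Ioc 0 u₁) * qintProd (Multiset.Ioc 0 v₁)) *
            (qintProd (Multiset.Ioc 0 a₃) /
              (qintProd (Multiset.Ioc 0 u₂) * qintProd (Multiset.Ioc 0 v₂))) *
            (qintProd (Multiset.Ioc 0 a₀) /
              (qintProd (Multiset.Ioc 0 a₃) * qintProd (Multiset.Ioc 0 w))) *
            (qintProd (Multiset.Ioc 0 s) /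
              (qintProd (Multiset.Ioc 0 a₃) * qintProd (Multiset.Ioc 0 c)))) =
        ofIntPoly p / RatFunc.X ^ N := by
  obtain ⟨p, N, h⟩ := exists_qintProd_div_eq_laurent
    (A := {a₀} + {s} + Multiset.Ioc 0 u₁ + Multiset.Ioc 0 v₁ + Multiset.Ioc 0 u₂ +
      Multiset.Ioc 0 v₂ + Multiset.Ioc 0 w + Multiset.Ioc 0 c)
    (B := {a₁} + {e} + Multiset.Ioc 0 a₀ + Multiset.Ioc 0 s)
    (by simp [Multiset.mem_Ioc]; omega) fun m hm => by
      simp only [Multiset.countP_add, countP_dvd_Ioc, ← Multiset.cons_zero, Multiset.countP_cons,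
        Multiset.countP_zero, zero_add]
      exact landau_inequality hm hw hc h₁ h₂ ha₁ he hs
  refine ⟨p, N, Eq.trans ?_ h⟩
  have hIoc : ∀ n, qintProd (Multiset.Ioc 0 n) ≠ 0 := fun n =>
    qintProd_ne_zero (by simp [Multiset.mem_Ioc])
  have h₃ := hIoc a₃
  have h₀ : qintProd {a₀} ≠ 0 := qintProd_ne_zero (by simpa using ha₀.symm)
  have hs₀ : qintProd {s} ≠ 0 := qintProd_ne_zero (by simp; omega)
  simp only [qintProd_add]
  field_simp

theorem stmt11_general (d₀ d₁ d₂ d₃ : ℤ) (h0 : 0 < d₀)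
    (h10 : d₁ ≤ d₀) (h20 : d₂ ≤ d₀) (h30 : d₃ ≤ d₀)
    (h13 : d₀ ≤ d₁ + d₃) (h23 : d₀ ≤ d₂ + d₃) (h33 : d₃ ≤ d₁ + d₂ + d₃ - d₀) :
    ∃ (p : Polynomial ℤ) (N : ℕ),
      (qint RatFunc.X d₁ * qint RatFunc.X (d₂ + d₃)) /
          (qint RatFunc.X d₀ * qint RatFunc.X (d₁ + d₂ + d₃ - d₀)) *
        (qbinom RatFunc.X d₃ (d₀ - d₁) * qbinom RatFunc.X d₃ (d₀ - d₂) *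
          qbinom RatFunc.X d₀ d₃ * qbinom RatFunc.X (d₁ + d₂ + d₃ - d₀) d₃) =
      algebraMap (Polynomial ℚ) (RatFunc ℚ) (p.map (Int.castRingHom ℚ)) /
        RatFunc.X ^ N := by
  simp (disch := omega) only [qbinom_of_le, qint_X_of_nonneg, qfact_X]
  exact exists_qint_qfact_ratio_eq_laurent (by omega) (by omega) (by omega) (by omega) (by omega)
    (by omega) (by omega) (by omega)

theorem stmt11 (d₀ d₁ d₂ d₃ : ℤ) (h0 : 0 < d₀) (h1 : 0 < d₁) (h2 : 0 < d₂)
    (h3 : 0 < d₃) (h10 : d₁ ≤ d₀) (h20 : d₂ ≤ d₀) (h30 : d₃ ≤ d₀)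
    (h13 : d₀ ≤ d₁ + d₃) (h23 : d₀ ≤ d₂ + d₃) (h33 : d₃ ≤ d₁ + d₂ + d₃ - d₀) :
    ∃ (p : Polynomial ℤ) (N : ℕ),
      (qint RatFunc.X d₁ * qint RatFunc.X (d₂ + d₃)) /
          (qint RatFunc.X d₀ * qint RatFunc.X (d₁ + d₂ + d₃ - d₀)) *
        (qbinom RatFunc.X d₃ (d₀ - d₁) * qbinom RatFunc.X d₃ (d₀ - d₂) *
          qbinom RatFunc.X d₀ d₃ * qbinom RatFunc.X (d₁ + d₂ + d₃ - d₀) d₃) =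
      algebraMap (Polynomial ℚ) (RatFunc ℚ) (p.map (Int.castRingHom ℚ)) /
        RatFunc.X ^ N :=
  stmt11_general d₀ d₁ d₂ d₃ h0 h10 h20 h30 h13 h23 h33
end

section
/- (Pfaff–Saalschütz, classical limit.) For all non-negative integers $A, B, C, D$, one has $\sum_{k=0}^{\min(A,B,C)} \frac{(A+B+C+D-k)!}{k!\,(A-k)!\,(B-k)!\,(C-k)!\,(D+k)!} = \binom{A+B+D}{B}\binom{A+C+D}{A}\binom{B+C+D}{C}$. -/
open Finset

/-- The binomial form of the summand (divided by `(A+B+D).choose B`). -/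
def gg (A B C D k : ℕ) : ℕ :=
  B.choose k * (A + D).choose (D + k) * (A + B + C + D - k).choose (A + B + D)

lemma gg_eq_zero_of_gt_A {A B C D k : ℕ} (h : A < k) : gg A B C D k = 0 := by
  unfold gg
  rw [Nat.choose_eq_zero_of_lt (by omega : A + D < D + k)]
  ring

lemma gg_eq_zero_of_gt_B {A B C D k : ℕ} (h : B < k) : gg A B C D k = 0 := by
  unfold gg
  rw [Nat.choose_eq_zero_of_lt h]
  ring

lemma gg_eq_zero_of_gt_C {A B C D k : ℕ} (hB : k ≤ B) (h : C < k) : gg A B C D k = 0 := by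
  unfold gg
  rw [Nat.choose_eq_zero_of_lt (by omega : A + B + C + D - k < A + B + D)]
  ring

/-- The Zeilberger-certificate pointwise identity. -/
lemma star (A B C D k : ℕ) :
    ((C : ℚ) + 1) * ((C : ℚ) + D + 1) * (gg A B (C + 1) D k : ℚ)
      + ((k : ℚ) + 1) * ((D : ℚ) + k + 1) * (gg A B (C + 1) D (k + 1) : ℚ)
    = ((A : ℚ) + C + D + 1) * ((B : ℚ) + C + D + 1) * (gg A B C D k : ℚ)
      + (k : ℚ) * ((D : ℚ) + k) * (gg A B (C + 1) D k : ℚ) := by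
  by_cases hB : B < k
  · rw [gg_eq_zero_of_gt_B hB, gg_eq_zero_of_gt_B (by omega : B < k + 1),
      gg_eq_zero_of_gt_B hB]
    push_cast; ring
  push_neg at hB
  by_cases hA : A < k
  · rw [gg_eq_zero_of_gt_A hA, gg_eq_zero_of_gt_A (by omega : A < k + 1),
      gg_eq_zero_of_gt_A hA]
    push_cast; ring
  push_neg at hA
  by_cases hC : C < k
  · have hgC : gg A B C D k = 0 := gg_eq_zero_of_gt_C hB hC
    have hg1 : gg A B (C + 1) D (k + 1) = 0 := by
      rcases Nat.lt_or_ge B (k + 1) with h | h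
      · exact gg_eq_zero_of_gt_B h
      · exact gg_eq_zero_of_gt_C h (by omega)
    rcases eq_or_lt_of_le (by omega : C + 1 ≤ k) with heq | hlt
    · subst heq
      rw [hgC, hg1]
      push_cast; ring
    · have hg0 : gg A B (C + 1) D k = 0 := gg_eq_zero_of_gt_C hB hlt
      rw [hgC, hg1, hg0]
      push_cast; ring
  push_neg at hC
  -- main computational case : k ≤ A, k ≤ B, k ≤ C
  unfold gg
  have e1 : A + B + (C + 1) + D - k = (A + B + C + D - k) + 1 := by omega
  have e2 : A + B + (C + 1) + D - (k + 1) = A + B + C + D - k := by omega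
  rw [e1, e2, show D + (k + 1) = D + k + 1 from by omega]
  -- absorption identities
  have h1 : (B.choose (k + 1) : ℚ) * ((k : ℚ) + 1) = (B.choose k : ℚ) * ((B : ℚ) - k) := by
    have h := congrArg (Nat.cast : ℕ → ℚ) (Nat.choose_succ_right_eq B k)
    push_cast [Nat.cast_sub hB] at h
    linarith [h]
  have h2 : ((A + D).choose (D + k + 1) : ℚ) * ((D : ℚ) + k + 1)
      = ((A + D).choose (D + k) : ℚ) * ((A : ℚ) - k) := by
    have h0 := Nat.choose_succ_right_eq (A + D) (D + k)
    rw [show A + D - (D + k) = A - k from by omega] at h0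
    have h := congrArg (Nat.cast : ℕ → ℚ) h0
    push_cast [Nat.cast_sub hA] at h
    linarith [h]
  have h3 : (((A + B + C + D - k) + 1).choose (A + B + D) : ℚ) * ((C : ℚ) + 1 - k)
      = ((A + B + C + D - k).choose (A + B + D) : ℚ)
          * ((A : ℚ) + B + C + D + 1 - k) := by
    have h0 := Nat.choose_mul_succ_eq (A + B + C + D - k) (A + B + D)
    rw [show A + B + C + D - k + 1 - (A + B + D) = C + 1 - k from by omega] at h0
    have h := congrArg (Nat.cast : ℕ → ℚ) h0
    push_cast [Nat.cast_sub (by omega : k ≤ A + B + C + D),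
      Nat.cast_sub (by omega : k ≤ C + 1)] at h
    linarith [h]
  push_cast
  linear_combination
    (((C : ℚ) + D + k + 1) * (B.choose k : ℚ) * ((A + D).choose (D + k) : ℚ)) * h3
    + (((D : ℚ) + k + 1) * ((A + D).choose (D + k + 1) : ℚ)
        * ((A + B + C + D - k).choose (A + B + D) : ℚ)) * h1
    + (((B : ℚ) - k) * (B.choose k : ℚ)
        * ((A + B + C + D - k).choose (A + B + D) : ℚ)) * h2

/-- Key identity (Saalschütz in binomial form), by induction on `C`. -/
lemma key (A B D : ℕ) : ∀ C : ℕ,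
    (∑ k ∈ Finset.range (B + 1), (gg A B C D k : ℚ))
      = ((A + C + D).choose A : ℚ) * ((B + C + D).choose C : ℚ) := by
  intro C
  induction C with
  | zero =>
      rw [Finset.sum_eq_single_of_mem 0 (by simp)]
      · simp only [gg, Nat.choose_zero_right, Nat.add_zero, Nat.sub_zero,
          Nat.choose_self]
        have hsymm := Nat.choose_symm (Nat.le_add_right A D)
        rw [show A + D - A = D from by omega] at hsymm
        rw [hsymm]
        push_cast; ring
      · intro k hk hk0
        simp only [Finset.mem_range] at hk
        by_cases hkB : B < k
        · rw [gg_eq_zero_of_gt_B hkB]; simp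
        · rw [gg_eq_zero_of_gt_C (by omega) (by omega)]; simp
  | succ C ih =>
      have tele : ∑ k ∈ Finset.range (B + 1),
          ((-((((k : ℚ) + 1)) * ((D : ℚ) + (k + 1 : ℕ)) * (gg A B (C + 1) D (k + 1) : ℚ)))
            - (-((k : ℚ) * ((D : ℚ) + k) * (gg A B (C + 1) D k : ℚ))))
          = (-(((B + 1 : ℕ) : ℚ) * ((D : ℚ) + (B + 1 : ℕ)) * (gg A B (C + 1) D (B + 1) : ℚ)))
            - (-((0 : ℚ) * ((D : ℚ) + 0) * (gg A B (C + 1) D 0 : ℚ))) := by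
        have h := Finset.sum_range_sub
          (fun k => -((k : ℚ) * ((D : ℚ) + k) * (gg A B (C + 1) D k : ℚ))) (B + 1)
        simpa using h
      have hgB1 : gg A B (C + 1) D (B + 1) = 0 := gg_eq_zero_of_gt_B (by omega)
      rw [hgB1] at tele
      have sum_star : ((C : ℚ) + 1) * ((C : ℚ) + D + 1)
            * (∑ k ∈ Finset.range (B + 1), (gg A B (C + 1) D k : ℚ))
          = ((A : ℚ) + C + D + 1) * ((B : ℚ) + C + D + 1)
            * (∑ k ∈ Finset.range (B + 1), (gg A B C D k : ℚ)) := by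
        have expand : ∀ k ∈ Finset.range (B + 1),
            ((C : ℚ) + 1) * ((C : ℚ) + D + 1) * (gg A B (C + 1) D k : ℚ)
              - ((A : ℚ) + C + D + 1) * ((B : ℚ) + C + D + 1) * (gg A B C D k : ℚ)
            = ((-((((k : ℚ) + 1)) * ((D : ℚ) + (k + 1 : ℕ)) * (gg A B (C + 1) D (k + 1) : ℚ)))
                - (-((k : ℚ) * ((D : ℚ) + k) * (gg A B (C + 1) D k : ℚ)))) := by
          intro k _
          have h := star A B C D k
          push_cast at h ⊢
          linarith [h]
        have h := Finset.sum_congr rfl expand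
        rw [Finset.sum_sub_distrib, tele] at h
        rw [← Finset.mul_sum, ← Finset.mul_sum] at h
        push_cast at h
        linarith [h]
      rw [ih] at sum_star
      have r1 : ((A + (C + 1) + D).choose A : ℚ) * ((C : ℚ) + D + 1)
          = ((A + C + D).choose A : ℚ) * ((A : ℚ) + C + D + 1) := by
        have h0 := Nat.choose_mul_succ_eq (A + C + D) A
        rw [show A + C + D + 1 - A = C + D + 1 from by omega] at h0
        have h := congrArg (Nat.cast : ℕ → ℚ) h0
        rw [show A + (C + 1) + D = A + C + D + 1 from by omega]
        push_cast at h ⊢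
        linarith [h]
      have r2 : ((B + (C + 1) + D).choose (C + 1) : ℚ) * ((C : ℚ) + 1)
          = ((B + C + D).choose C : ℚ) * ((B : ℚ) + C + D + 1) := by
        have h0 := Nat.add_one_mul_choose_eq (B + C + D) C
        have h := congrArg (Nat.cast : ℕ → ℚ) h0
        rw [show B + (C + 1) + D = B + C + D + 1 from by omega]
        push_cast at h ⊢
        linarith [h]
      have hC1 : ((C : ℚ) + 1) ≠ 0 := by positivity
      have hCD1 : ((C : ℚ) + D + 1) ≠ 0 := by positivity
      have goal_eq : ((C : ℚ) + 1) * ((C : ℚ) + D + 1)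
            * (((A + (C + 1) + D).choose A : ℚ) * ((B + (C + 1) + D).choose (C + 1) : ℚ))
          = ((C : ℚ) + 1) * ((C : ℚ) + D + 1)
            * (∑ k ∈ Finset.range (B + 1), (gg A B (C + 1) D k : ℚ)) := by
        rw [sum_star]
        linear_combination (((B + (C + 1) + D).choose (C + 1) : ℚ) * ((C : ℚ) + 1)) * r1
          + (((A + C + D).choose A : ℚ) * ((A : ℚ) + C + D + 1)) * r2
      have h := mul_left_cancel₀ (mul_ne_zero hC1 hCD1) goal_eq
      push_cast at h ⊢
      linarith [h]

theorem stmt12 (A B C D : ℕ) :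
    (∑ k ∈ Finset.range (Nat.min A (Nat.min B C) + 1),
        ((A + B + C + D - k).factorial : ℚ) /
          ((k.factorial : ℚ) * ((A - k).factorial : ℚ) * ((B - k).factorial : ℚ) *
            ((C - k).factorial : ℚ) * ((D + k).factorial : ℚ))) =
      (((A + B + D).choose B : ℚ)) * (((A + C + D).choose A : ℚ)) *
        (((B + C + D).choose C : ℚ)) := by
  have hmA : Nat.min A (Nat.min B C) ≤ A := Nat.min_le_left _ _
  have hmB : Nat.min A (Nat.min B C) ≤ B :=
    le_trans (Nat.min_le_right _ _) (Nat.min_le_left _ _)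
  have hmC : Nat.min A (Nat.min B C) ≤ C :=
    le_trans (Nat.min_le_right _ _) (Nat.min_le_right _ _)
  have conv : ∀ k ∈ Finset.range (Nat.min A (Nat.min B C) + 1),
      ((A + B + C + D - k).factorial : ℚ) /
          ((k.factorial : ℚ) * ((A - k).factorial : ℚ) * ((B - k).factorial : ℚ) *
            ((C - k).factorial : ℚ) * ((D + k).factorial : ℚ))
        = ((A + B + D).choose B : ℚ) * (gg A B C D k : ℚ) := by
    intro k hk
    simp only [Finset.mem_range] at hk
    have hkA : k ≤ A := by omega
    have hkB : k ≤ B := by omega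
    have hkC : k ≤ C := by omega
    unfold gg
    push_cast
    rw [Nat.cast_choose ℚ hkB,
        Nat.cast_choose ℚ (by omega : D + k ≤ A + D),
        Nat.cast_choose ℚ (by omega : A + B + D ≤ A + B + C + D - k),
        Nat.cast_choose ℚ (by omega : B ≤ A + B + D)]
    rw [show A + D - (D + k) = A - k from by omega,
        show A + B + C + D - k - (A + B + D) = C - k from by omega,
        show A + B + D - B = A + D from by omega]
    have nz : ∀ n : ℕ, ((n.factorial : ℚ) ≠ 0) := fun n => by
      exact_mod_cast (Nat.factorial_ne_zero n)
    field_simp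
  rw [Finset.sum_congr rfl conv, ← Finset.mul_sum]
  have ext : (∑ k ∈ Finset.range (Nat.min A (Nat.min B C) + 1), (gg A B C D k : ℚ))
      = ∑ k ∈ Finset.range (B + 1), (gg A B C D k : ℚ) := by
    apply Finset.sum_subset
    · apply Finset.range_subset_range.2; omega
    · intro x hx hx'
      simp only [Finset.mem_range] at hx hx'
      by_cases hA : A < x
      · rw [gg_eq_zero_of_gt_A hA]; simp
      · have hCx : C < x := by
          by_contra hc
          push_neg at hc hA
          have hxm : x ≤ Nat.min A (Nat.min B C) :=
            le_min hA (le_min (by omega) hc)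
          omega
        rw [gg_eq_zero_of_gt_C (by omega) hCx]; simp
  rw [ext, key A B D C]
  ring
end
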